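/- The R(T)-valued operator norm on the T-strong dual Ê, defined by ‖𝔣‖ := inf{k ∈ R(T)_+ : |𝔣(x)| ≤ k‖x‖_{T,2} for all x ∈ E}, is attained in the sense that |𝔣(x)| ≤ ‖𝔣‖ ‖x‖_{T,2} for all x ∈ L^2(T); i.e., the infimum defining ‖𝔣‖ is a minimum. -/

import Mathlib

/-!
Common setup.  `E` models the universal completion `E_u` of the `T`-universally
complete Riesz space `L¹(T)`: a Dedekind complete (conditionally complete)
`f`-algebra whose multiplicative unit `1 = e = Te` is a weak order unit.
`T : E → E` models the strictly positive conditional expectation operator,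
`L1 ⊆ E` its natural domain `L¹(T)`, `L2 L1` the space `L²(T)` and `RT T` the
range `R(T)` of `T`.
-/

variable {E : Type*}

/-- The range `R(T)` of the conditional expectation operator. -/
def RT (T : E → E) : Set E := Set.range T

/-- `L²(T) = {f ∈ L¹(T) : f² ∈ L¹(T)}`, the product taken in the `f`-algebra `E_u`. -/
def L2 [Mul E] (L1 : Set E) : Set E := {f | f ∈ L1 ∧ f * f ∈ L1}

variable [CommRing E] [ConditionallyCompleteLattice E]

/-- `T` is a strictly positive conditional expectation operator on the
`T`-universally complete space `L¹(T)` (modelled by the set `L1` inside the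
Dedekind complete `f`-algebra `E`), with `1 = e = Te` a weak order unit. -/
structure IsCondExp (T : E → E) (L1 : Set E) : Prop where
  /-- compatibility of the order with addition -/
  addLe : ∀ a b c : E, a ≤ b → a + c ≤ b + c
  /-- products of positive elements are positive -/
  mulPos : ∀ a b : E, 0 ≤ a → 0 ≤ b → 0 ≤ a * b
  /-- the `f`-algebra property -/
  fAlg : ∀ a b c : E, a ⊓ b = 0 → 0 ≤ c → (c * a) ⊓ b = 0
  /-- `1 = e` is a weak order unit -/
  weakUnit : ∀ x : E, 0 ≤ x → x ⊓ 1 = 0 → x = 0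
  /-- `T` is additive -/
  addT : ∀ a b : E, T (a + b) = T a + T b
  /-- `T` is positive -/
  posT : ∀ a : E, 0 ≤ a → 0 ≤ T a
  /-- `T` is strictly positive -/
  strictT : ∀ a : E, 0 ≤ a → T a = 0 → a = 0
  /-- `T` is a projection -/
  projT : ∀ a : E, T (T a) = T a
  /-- `T` maps the weak order unit `e = 1` to itself -/
  unitT : T 1 = 1
  /-- `T` is an averaging operator: `T(T a · b) = T a · T b` -/
  avgT : ∀ a b : E, T (T a * b) = T a * T b
  /-- `T` is order continuous -/
  ordContT : ∀ S : Set E, S.Nonempty → DirectedOn (· ≥ ·) S → (∀ x ∈ S, 0 ≤ x) →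
      IsGLB S 0 → IsGLB (T '' S) 0
  /-- `L¹(T)` is closed under addition -/
  l1add : ∀ a ∈ L1, ∀ b ∈ L1, a + b ∈ L1
  /-- `L¹(T)` is solid -/
  l1sol : ∀ a ∈ L1, ∀ b : E, |b| ≤ |a| → b ∈ L1
  /-- `R(T) ⊆ L¹(T)` and `T` maps `L¹(T)` into itself -/
  rtL1 : ∀ a : E, T a ∈ L1
  /-- `L²(T)` is an `R(T)`-module -/
  l2mod : ∀ α ∈ RT T, ∀ x ∈ L2 L1, α * x ∈ L2 L1
  /-- `T`-universal completeness of `L¹(T)` -/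
  tuc : ∀ S : Set E, S.Nonempty → (∀ x ∈ S, 0 ≤ x ∧ x ∈ L1) → DirectedOn (· ≤ ·) S →
      BddAbove (T '' S) → BddAbove S ∧ sSup S ∈ L1

/-- `sqrt` is a square-root function on the positive cone of the `f`-algebra. -/
def IsSqrt (sqrt : E → E) : Prop := ∀ a : E, 0 ≤ a → 0 ≤ sqrt a ∧ sqrt a * sqrt a = a

/-- The `R(T)`-valued norm `‖f‖_{T,2} = (T (f²))^{1/2}` on `L²(T)`. -/
def nrm (T : E → E) (sqrt : E → E) (f : E) : E := sqrt (T (f * f))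

/-- A `T`-linear functional on `E = L²(T)`: `R(T)`-valued, additive,
`R(T)`-homogeneous and order bounded.  The set of these is the `T`-dual `E*`. -/
def TLinear (T : E → E) (L1 : Set E) (F : E → E) : Prop :=
  (∀ x ∈ L2 L1, F x ∈ RT T) ∧
  (∀ x ∈ L2 L1, ∀ y ∈ L2 L1, F (x + y) = F x + F y) ∧
  (∀ α ∈ RT T, ∀ x ∈ L2 L1, F (α * x) = α * F x) ∧
  (∀ x ∈ L2 L1, 0 ≤ x → ∃ b : E, ∀ y ∈ L2 L1, |y| ≤ x → |F y| ≤ b)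

/-- `T`-strong boundedness: `|F x| ≤ k ‖x‖_{T,2}` for some `k ∈ R(T)₊`. -/
def StronglyBdd (T : E → E) (L1 : Set E) (sqrt : E → E) (F : E → E) : Prop :=
  ∃ k ∈ RT T, 0 ≤ k ∧ ∀ x ∈ L2 L1, |F x| ≤ k * nrm T sqrt x

/-- Membership in the `T`-strong dual `Ê` of `L²(T)`. -/
def MemEhat (T : E → E) (L1 : Set E) (sqrt : E → E) (F : E → E) : Prop :=
  TLinear T L1 F ∧ StronglyBdd T L1 sqrt F

/-- The Riesz representation map `Ψ(f)(g) = T (f g)`. -/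
def Psi (T : E → E) (f : E) : E → E := fun g => T (f * g)

/-- The Riesz–Kantorovich set `{F y + G z : y, z ∈ L²(T)₊, y + z = x}` whose
supremum is `(F ∨ G)(x)` and whose infimum is `(F ∧ G)(x)`. -/
def RKset (L1 : Set E) (F G : E → E) (x : E) : Set E :=
  {v | ∃ y z : E, y ∈ L2 L1 ∧ z ∈ L2 L1 ∧ 0 ≤ y ∧ 0 ≤ z ∧ y + z = x ∧ v = F y + G z}

/-- The partial order on functionals: `F ≤ G` iff `F x ≤ G x` for all `x ∈ L²(T)₊`. -/
def leF [Mul E] (L1 : Set E) (F G : E → E) : Prop := ∀ x ∈ L2 L1, 0 ≤ x → F x ≤ G x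

/-!
`R(T)` is a sublattice and contains `m = inf K`: whenever `T a ≤ a`, strict positivity
applied to `a - T a` forces `T a = a`. In an `f`-algebra multiplication by `y ≥ 0`
distributes over `⊓`, so the set `K` of admissible constants is downward directed, and it
remains to see that multiplication by `y = ‖x‖_{T,2}` is order continuous on directed sets.
If `0 ≤ b ≤ (k - m) y` for all `k ∈ K`, write `y ≤ n + (y - n)⁺`; the `f`-algebra property
makes `(k - m)(y - n)⁺` disjoint from `(n - y)⁺`, so `b ⊓ (n - y)⁺ ≤ n (k - m)` for every
`k`, and directedness gives `b ⊓ (n - y)⁺ = 0`. Then `(1 + y) ⊓ n ≤ 1 + y - b ⊓ 1` for all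
`n`, and since `⨆ n, z ⊓ n = z` for the weak unit `1` in a Dedekind complete space,
`b ⊓ 1 = 0`, i.e. `b = 0`.
-/

section LatticeOrderedGroup

variable {α : Type*} [AddCommGroup α] [Lattice α] [IsOrderedAddMonoid α]

theorem inf_le_add_inf {u : α} (hu : 0 ≤ u) (v w : α) : (u + v) ⊓ w ≤ u + v ⊓ w := by
  rw [add_inf]
  exact inf_le_inf_left _ (le_add_of_nonneg_left hu)

theorem DirectedOn.le_zero_of_forall_le_nsmul_sub {K : Set α} {m : α}
    (hdir : DirectedOn (· ≥ ·) K) (hne : K.Nonempty) (hK : IsGLB K m) :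
    ∀ (n : ℕ) {c : α}, (∀ k ∈ K, c ≤ n • (k - m)) → c ≤ 0
  | 0, c, h => by
    obtain ⟨k, hk⟩ := hne
    simpa using h k hk
  | n + 1, c, h => by
    have hlb : c + m ∈ lowerBounds K := fun k' hk' => by
      have : c - (k' - m) ≤ 0 :=
        hdir.le_zero_of_forall_le_nsmul_sub hne hK n fun k hk => by
          obtain ⟨k'', hk'', hk''k, hk''k'⟩ := hdir k hk k' hk'
          have hc := h k'' hk''
          rw [succ_nsmul] at hc
          exact sub_le_iff_le_add.2 (hc.trans (add_le_add
            (nsmul_le_nsmul_right (sub_le_sub_right hk''k m) n) (sub_le_sub_right hk''k' m)))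
      rwa [sub_nonpos, le_sub_iff_add_le] at this
    exact add_le_iff_nonpos_left.1 (hK.2 hlb)

end LatticeOrderedGroup

section WeakUnit

variable {α : Type*} [AddCommGroup α] [ConditionallyCompleteLattice α] [IsOrderedAddMonoid α]
  {e : α}

theorem ciSup_inf_nsmul_eq_self (he0 : 0 ≤ e) (he : ∀ x : α, 0 ≤ x → x ⊓ e = 0 → x = 0)
    (z : α) : ⨆ n : ℕ, z ⊓ n • e = z := by
  have hbdd : BddAbove (Set.range fun n : ℕ => z ⊓ n • e) :=
    ⟨z, by rintro _ ⟨n, rfl⟩; exact inf_le_left⟩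
  set w := ⨆ n : ℕ, z ⊓ n • e
  have hwz : w ≤ z := ciSup_le fun n => inf_le_left
  set t := (z - w) ⊓ e
  have hstep : ∀ n : ℕ, z ⊓ n • e + t ≤ w := fun n => by
    refine le_trans (le_inf ?_ ?_) (le_ciSup hbdd (n + 1))
    · calc z ⊓ n • e + t ≤ w + (z - w) := add_le_add (le_ciSup hbdd n) inf_le_left
        _ = z := add_sub_cancel w z
    · rw [succ_nsmul]
      exact add_le_add inf_le_right inf_le_right
  have ht : t ≤ 0 := (le_sub_self_iff w).1 (ciSup_le fun n => le_sub_iff_add_le.2 (hstep n))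
  have hzw : z - w = 0 :=
    he _ (sub_nonneg.2 hwz) (le_antisymm ht (le_inf (sub_nonneg.2 hwz) he0))
  exact (sub_eq_zero.1 hzw).symm

theorem eq_zero_of_forall_inf_posPart_nsmul_sub_eq_zero (he0 : 0 ≤ e)
    (he : ∀ x : α, 0 ≤ x → x ⊓ e = 0 → x = 0) {b : α} (hb : 0 ≤ b) (y : α)
    (h : ∀ n : ℕ, b ⊓ (n • e - y)⁺ = 0) : b = 0 := by
  set c := b ⊓ e
  have hc : ∀ n : ℕ, (e + y) ⊓ n • e ≤ e + y - c := fun n => by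
    set r := (n • e - y)⁺ ⊓ e
    have hcr : c ⊓ r = 0 := le_antisymm
      (h n ▸ inf_le_inf inf_le_left inf_le_left)
      (le_inf (le_inf hb he0) (le_inf (posPart_nonneg _) he0))
    -- disjoint positive elements add up to their supremum
    have hcr' : c + r ≤ e := by
      rw [← inf_add_sup, hcr, zero_add]
      exact sup_le inf_le_right inf_le_right
    have : c + (n • e - y) ⊓ e ≤ e :=
      le_trans (add_le_add_right (inf_le_inf_right e (le_posPart _)) c) hcr'
    calc (e + y) ⊓ n • e = (n • e - y) ⊓ e + y := by rw [inf_add, sub_add_cancel, inf_comm]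
      _ ≤ e - c + y := add_le_add (le_sub_iff_add_le'.2 this) le_rfl
      _ = e + y - c := sub_add_eq_add_sub e c y
  have hce : c ≤ 0 := by
    refine (le_sub_self_iff (e + y)).1 ?_
    have := ciSup_le hc
    rwa [ciSup_inf_nsmul_eq_self he0 he] at this
  exact he b hb (le_antisymm hce (le_inf hb he0))

end WeakUnit

class IsFAlgebra (α : Type*) [Mul α] [Zero α] [Lattice α] : Prop where
  mul_inf_eq_zero {a b c : α} : a ⊓ b = 0 → 0 ≤ c → (c * a) ⊓ b = 0

namespace IsFAlgebra

theorem mul_eq_zero_of_inf_eq_zero {α : Type*} [CommRing α] [Lattice α] [IsFAlgebra α]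
    {a b : α} (ha : 0 ≤ a) (h : a ⊓ b = 0) : a * b = 0 := by
  have hb : 0 ≤ b := h ▸ inf_le_right
  have hba : b ⊓ (b * a) = 0 := by rw [inf_comm]; exact mul_inf_eq_zero h hb
  simpa [mul_comm b a] using mul_inf_eq_zero hba ha

section OrderedAddGroup

variable {α : Type*} [CommRing α] [Lattice α] [IsOrderedAddMonoid α] [IsFAlgebra α]

theorem mul_self_nonneg (hmul : ∀ a b : α, 0 ≤ a → 0 ≤ b → 0 ≤ a * b) (x : α) : 0 ≤ x * x := by
  have hx : x * x = x⁺ * x⁺ + x⁻ * x⁻ := by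
    have hpn : x⁺ * x⁻ = 0 :=
      mul_eq_zero_of_inf_eq_zero (posPart_nonneg x) (posPart_inf_negPart_eq_zero x)
    conv_lhs => rw [← posPart_sub_negPart x]
    linear_combination (-2 : α) * hpn
  rw [hx]
  exact add_nonneg (hmul _ _ (posPart_nonneg x) (posPart_nonneg x))
    (hmul _ _ (negPart_nonneg x) (negPart_nonneg x))

theorem isOrderedRing (hmul : ∀ a b : α, 0 ≤ a → 0 ≤ b → 0 ≤ a * b) : IsOrderedRing α :=
  have : ZeroLEOneClass α := ⟨by simpa using mul_self_nonneg hmul 1⟩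
  .of_mul_nonneg hmul

theorem mul_inf_of_nonneg {c : α} (hc : 0 ≤ c) (a b : α) : c * (a ⊓ b) = c * a ⊓ c * b := by
  set i := a ⊓ b
  have hab : (a - i) ⊓ (b - i) = 0 := by
    rw [sub_eq_neg_add, sub_eq_neg_add, ← add_inf, neg_add_cancel]
  have hba : (b - i) ⊓ (c * (a - i)) = 0 := by rw [inf_comm]; exact mul_inf_eq_zero hab hc
  have key : (c * a - c * i) ⊓ (c * b - c * i) = 0 := by
    rw [← mul_sub, ← mul_sub, inf_comm]; exact mul_inf_eq_zero hba hc
  rw [sub_eq_neg_add, sub_eq_neg_add, ← add_inf, neg_add_eq_zero] at key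
  exact key

end OrderedAddGroup

section OrderedRing

variable {α : Type*} [CommRing α] [Lattice α] [IsOrderedRing α] [IsFAlgebra α]

theorem inf_posPart_nsmul_sub_le_nsmul {b d y : α} (hd : 0 ≤ d) (hb : b ≤ d * y) (n : ℕ) :
    b ⊓ (n • 1 - y)⁺ ≤ n • d := by
  have hy : y ≤ n • 1 + (y - n • 1)⁺ := sub_le_iff_le_add'.1 (le_posPart _)
  have hdisj : (d * (y - n • 1)⁺) ⊓ (n • 1 - y)⁺ = 0 := by
    refine mul_inf_eq_zero ?_ hd
    rw [← neg_sub y, posPart_neg]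
    exact posPart_inf_negPart_eq_zero (y - n • 1)
  calc b ⊓ (n • (1 : α) - y)⁺ ≤ (n • d + d * (y - n • 1)⁺) ⊓ (n • 1 - y)⁺ := by
        refine inf_le_inf_right _ (hb.trans ?_)
        calc d * y ≤ d * (n • 1 + (y - n • 1)⁺) := mul_le_mul_of_nonneg_left hy hd
          _ = n • d + d * (y - n • 1)⁺ := by rw [mul_add, mul_smul_comm, mul_one]
    _ ≤ n • d + (d * (y - n • 1)⁺) ⊓ (n • 1 - y)⁺ := inf_le_add_inf (nsmul_nonneg hd n) _ _
    _ = n • d := by rw [hdisj, add_zero]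

end OrderedRing

end IsFAlgebra

theorem IsGLB.image_mul_right_of_directedOn {α : Type*} [CommRing α]
    [ConditionallyCompleteLattice α] [IsOrderedRing α] [IsFAlgebra α]
    (hunit : ∀ x : α, 0 ≤ x → x ⊓ 1 = 0 → x = 0) {K : Set α} {m y : α} (hK : IsGLB K m)
    (hne : K.Nonempty) (hdir : DirectedOn (· ≥ ·) K) (hy : 0 ≤ y) :
    IsGLB ((· * y) '' K) (m * y) := by
  refine ⟨?_, fun l hl => ?_⟩
  · rintro _ ⟨k, hk, rfl⟩
    exact mul_le_mul_of_nonneg_right (hK.1 hk) hy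
  set b := (l - m * y)⁺
  have hb : ∀ k ∈ K, b ≤ (k - m) * y := fun k hk =>
    sup_le (by rw [sub_mul]; exact sub_le_sub_right (hl ⟨k, hk, rfl⟩) _)
      (mul_nonneg (sub_nonneg.2 (hK.1 hk)) hy)
  have hbn : ∀ n : ℕ, b ⊓ (n • (1 : α) - y)⁺ = 0 := fun n =>
    le_antisymm
      (hdir.le_zero_of_forall_le_nsmul_sub hne hK n fun k hk =>
        IsFAlgebra.inf_posPart_nsmul_sub_le_nsmul (sub_nonneg.2 (hK.1 hk)) (hb k hk) n)
      (le_inf (posPart_nonneg _) (posPart_nonneg _))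
  have hb0 : b = 0 :=
    eq_zero_of_forall_inf_posPart_nsmul_sub_eq_zero zero_le_one hunit (posPart_nonneg _) y hbn
  exact sub_nonpos.1 (posPart_eq_zero.1 hb0)

namespace IsCondExp

variable {T : E → E} {L1 : Set E}

theorem isOrderedAddMonoid (hT : IsCondExp T L1) : IsOrderedAddMonoid E :=
  { add_le_add_left := fun a b h c => hT.addLe a b c h }

theorem isFAlgebra (hT : IsCondExp T L1) : IsFAlgebra E :=
  ⟨fun h hc => hT.fAlg _ _ _ h hc⟩

theorem isOrderedRing (hT : IsCondExp T L1) : IsOrderedRing E :=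
  have := hT.isOrderedAddMonoid
  have := hT.isFAlgebra
  IsFAlgebra.isOrderedRing hT.mulPos

theorem map_sub (hT : IsCondExp T L1) (a b : E) : T (a - b) = T a - T b :=
  _root_.map_sub (AddMonoidHom.mk' T hT.addT) a b

theorem monotone (hT : IsCondExp T L1) : Monotone T := fun a b hab => by
  have := hT.isOrderedAddMonoid
  simpa [hT.map_sub] using hT.posT (b - a) (sub_nonneg.2 hab)

theorem apply_eq_of_apply_le (hT : IsCondExp T L1) {a : E} (h : T a ≤ a) : T a = a := by
  have := hT.isOrderedAddMonoid
  refine (sub_eq_zero.1 (hT.strictT (a - T a) (sub_nonneg.2 h) ?_)).symm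
  rw [hT.map_sub, hT.projT, sub_self]

theorem mem_RT_of_isGLB (hT : IsCondExp T L1) {S : Set E} {m : E} (hS : S ⊆ RT T)
    (hm : IsGLB S m) : m ∈ RT T := by
  refine ⟨m, hT.apply_eq_of_apply_le (hm.2 fun k hk => ?_)⟩
  obtain ⟨a, rfl⟩ := hS hk
  exact (hT.monotone (hm.1 hk)).trans_eq (hT.projT a)

theorem nrm_nonneg (hT : IsCondExp T L1) {sqrt : E → E} (hsqrt : IsSqrt sqrt) (x : E) :
    0 ≤ nrm T sqrt x :=
  have := hT.isOrderedAddMonoid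
  have := hT.isFAlgebra
  (hsqrt _ (hT.posT _ (IsFAlgebra.mul_self_nonneg hT.mulPos x))).1

end IsCondExp

def opNormBounds (T : E → E) (L1 : Set E) (sqrt F : E → E) : Set E :=
  {k : E | k ∈ RT T ∧ 0 ≤ k ∧ ∀ x ∈ L2 L1, |F x| ≤ k * nrm T sqrt x}

theorem IsCondExp.directedOn_opNormBounds {T : E → E} {L1 : Set E} (hT : IsCondExp T L1)
    {sqrt : E → E} (hsqrt : IsSqrt sqrt) (F : E → E) :
    DirectedOn (· ≥ ·) (opNormBounds T L1 sqrt F) := by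
  have := hT.isOrderedAddMonoid
  have := hT.isFAlgebra
  rintro k₁ ⟨hk₁, hk₁0, hFk₁⟩ k₂ ⟨hk₂, hk₂0, hFk₂⟩
  refine ⟨k₁ ⊓ k₂, ⟨hT.mem_RT_of_isGLB (Set.pair_subset hk₁ hk₂) isGLB_pair,
    le_inf hk₁0 hk₂0, fun x hx => ?_⟩, inf_le_left, inf_le_right⟩
  rw [mul_comm, IsFAlgebra.mul_inf_of_nonneg (hT.nrm_nonneg hsqrt x), mul_comm, mul_comm _ k₂]
  exact le_inf (hFk₁ x hx) (hFk₂ x hx)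

/-- The `R(T)`-valued operator norm
`‖F‖ = inf {k ∈ R(T)₊ : |F x| ≤ k ‖x‖_{T,2} ∀ x}` on `Ê` is attained: the
infimum is a minimum, so that `|F x| ≤ ‖F‖ ‖x‖_{T,2}` for all `x ∈ L²(T)`. -/
theorem stmt14 (T : E → E) (L1 : Set E) (hT : IsCondExp T L1)
    (sqrt : E → E) (hsqrt : IsSqrt sqrt)
    (F : E → E) (hF : MemEhat T L1 sqrt F) :
    ∃ m : E, m ∈ RT T ∧ 0 ≤ m ∧
      IsGLB {k : E | k ∈ RT T ∧ 0 ≤ k ∧ ∀ x ∈ L2 L1, |F x| ≤ k * nrm T sqrt x} m ∧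
      ∀ x ∈ L2 L1, |F x| ≤ m * nrm T sqrt x := by
  have := hT.isOrderedRing
  have := hT.isFAlgebra
  obtain ⟨k₀, hk₀⟩ := hF.2
  have hne : (opNormBounds T L1 sqrt F).Nonempty := ⟨k₀, hk₀⟩
  have hK : IsGLB (opNormBounds T L1 sqrt F) (sInf (opNormBounds T L1 sqrt F)) :=
    isGLB_csInf hne ⟨0, fun k hk => hk.2.1⟩
  refine ⟨_, hT.mem_RT_of_isGLB (fun k hk => hk.1) hK, hK.2 fun k hk => hk.2.1, hK,
    fun x hx => ?_⟩
  have hKx := hK.image_mul_right_of_directedOn hT.weakUnit hne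
    (hT.directedOn_opNormBounds hsqrt F) (hT.nrm_nonneg hsqrt x)
  exact hKx.2 (by rintro _ ⟨k, hk, rfl⟩; exact hk.2.2 x hx)
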